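/- Let (G_n, f_n) be an inverse sequence of countable abelian groups indexed by ℕ. Then (G_n) satisfies the Mittag-Leffler condition if and only if the derived limit lim¹ G_n is the zero group. -/

import Mathlib

/-!
If the images `f_{n,m}(G m) ⊆ G n` stabilise, the stable images form a subsystem with
surjective bonding maps, on which `Δ` is onto by solving `Δ z = d` one coordinate at a time.
An arbitrary `x` is pushed into it by subtracting `Δ y`, where `y n` is a finite partial sum
`∑_{n ≤ j < M n} f_{n,j}(x j)` with `M n` beyond the stabilisation index: what is left over at
`n` is the image of the terms `x j` with `j ≥ M n`, which lies in the stable image.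

Conversely, if `Δ y = x` then `y n ≡ ∑_{n ≤ j < J} f_{n,j}(x j)` modulo the image of `G J`, for
every `J`. If the images in `G n` drop infinitely often, enumerate the countable group `G n`
along the drops and choose `x` diagonally: at the drop at `j`, the term `f_{n,j}(x j)` is chosen
in the image of `G j` so that the `j`-th element of the enumeration is not congruent to the
partial sum modulo the image of `G (j + 1)`. Then `Δ y = x` has no solution.
-/

/-- The composite bonding map `f_{n,m} : G m →+ G n` for `n ≤ m`, namely
`f n ∘ f (n+1) ∘ ⋯ ∘ f (m-1)` (with `f_{n,n} = id`). -/
def fnm (G : ℕ → Type*) [∀ n, AddCommGroup (G n)] (f : ∀ n, G (n + 1) →+ G n)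
    (n m : ℕ) (h : n ≤ m) : G m →+ G n :=
  Nat.leRecOn h (fun {k} (g : G k →+ G n) => g.comp (f k)) (AddMonoidHom.id (G n))

/-- The map `Δ : ∏ G n → ∏ G n` defined by `Δ(x)_n = x_n - f_n (x_{n+1})`; its kernel is the
inverse limit `lim G n` and its cokernel is the derived limit `lim¹ G n`. -/
def delta (G : ℕ → Type*) [∀ n, AddCommGroup (G n)] (f : ∀ n, G (n + 1) →+ G n) :
    (∀ n, G n) →+ (∀ n, G n) where
  toFun x := fun n => x n - f n (x (n + 1))
  map_zero' := by
    funext n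
    show (0 : G n) - f n 0 = 0
    rw [map_zero, sub_zero]
  map_add' := by
    intro a b
    funext n
    show (a n + b n) - f n (a (n + 1) + b (n + 1)) =
      (a n - f n (a (n + 1))) + (b n - f n (b (n + 1)))
    rw [map_add]
    abel

theorem Antitone.infinite_setOf_lt_succ {α : Type*} [PartialOrder α] {u : ℕ → α}
    (hu : Antitone u) (h : ∀ m, ∃ k ≥ m, u k ≠ u m) : {j | u (j + 1) < u j}.Infinite := by
  refine Set.infinite_of_forall_exists_gt fun a => ?_
  obtain ⟨k, hk, hne⟩ := h (a + 1)
  by_contra! hs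
  refine hne (Nat.le_induction rfl (fun j hj ih => ?_) k hk)
  exact ((hu j.le_succ).eq_of_not_lt fun hlt => by have := hs j hlt; omega).trans ih

theorem Set.Infinite.exists_surjOn_univ {α : Type*} [Countable α] [Nonempty α] {D : Set ℕ}
    (hD : D.Infinite) : ∃ a : ℕ → α, Set.SurjOn a D Set.univ := by
  classical
  obtain ⟨e, he⟩ := exists_surjective_nat α
  refine ⟨fun j => e (Nat.count (· ∈ D) j), fun c _ => ?_⟩
  obtain ⟨K, rfl⟩ := he c
  exact ⟨Nat.nth (· ∈ D) K, Nat.nth_mem_of_infinite hD K, by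
    simp only [Nat.count_nth_of_infinite (p := (· ∈ D)) hD K]⟩

theorem AddSubgroup.exists_mem_sub_notMem_of_lt {A : Type*} [AddGroup A] {K H : AddSubgroup A}
    (hKH : K < H) (c : A) : ∃ g ∈ H, c - g ∉ K := by
  obtain ⟨u, huH, huK⟩ := SetLike.exists_of_lt hKH
  by_cases hc : c ∈ H
  · exact ⟨-u + c, add_mem (neg_mem huH) hc, by
      rwa [sub_eq_add_neg, neg_add_rev, neg_neg, add_neg_cancel_left]⟩
  · exact ⟨0, zero_mem H, fun h => hc (hKH.le (by simpa using h))⟩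

section InverseSequence

variable {G : ℕ → Type*} [∀ n, AddCommGroup (G n)] {f : ∀ n, G (n + 1) →+ G n}

theorem fnm_self (n : ℕ) : fnm G f n n le_rfl = AddMonoidHom.id (G n) :=
  Nat.leRecOn_self _

theorem fnm_succ {n m : ℕ} (h : n ≤ m) :
    fnm G f n (m + 1) (h.trans m.le_succ) = (fnm G f n m h).comp (f m) :=
  Nat.leRecOn_succ h _

theorem fnm_succ_left {n m : ℕ} (h : n + 1 ≤ m) (v : G m) :
    f n (fnm G f (n + 1) m h v) = fnm G f n m (n.le_succ.trans h) v := by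
  induction m, h using Nat.le_induction with
  | base =>
    rw [fnm_self, fnm_succ le_rfl, fnm_self]
    rfl
  | succ m h ih =>
    rw [fnm_succ h, fnm_succ (n.le_succ.trans h), AddMonoidHom.comp_apply, ih]
    rfl

variable (G f) in
/-- The image of `G m` in `G n`, taken to be `⊤` when `m < n` so that it is antitone in `m`. -/
def bondingRange (n m : ℕ) : AddSubgroup (G n) :=
  ⨅ h : n ≤ m, (fnm G f n m h).range

theorem bondingRange_of_le {n m : ℕ} (h : n ≤ m) :
    bondingRange G f n m = (fnm G f n m h).range :=
  iInf_pos h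

theorem bondingRange_eq_top {n m : ℕ} (h : m ≤ n) : bondingRange G f n m = ⊤ := by
  rcases h.lt_or_eq with h | rfl
  · exact iInf_neg (by omega)
  · rw [bondingRange_of_le le_rfl, fnm_self, AddMonoidHom.range_eq_top]
    exact Function.surjective_id

theorem fnm_mem_bondingRange {n m : ℕ} (h : n ≤ m) (v : G m) :
    fnm G f n m h v ∈ bondingRange G f n m := by
  rw [bondingRange_of_le h]
  exact ⟨v, rfl⟩

theorem bondingRange_antitone (n : ℕ) : Antitone (bondingRange G f n) := by
  refine antitone_nat_of_succ_le fun m => ?_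
  by_cases h : n ≤ m
  · rw [bondingRange_of_le h, bondingRange_of_le (h.trans m.le_succ), fnm_succ h,
      AddMonoidHom.range_comp]
    exact AddSubgroup.map_le_range _ _
  · rw [bondingRange_eq_top (not_le.mp h).le]
    exact le_top

theorem bondingRange_eq_map_succ {n m : ℕ} (h : n + 1 ≤ m) :
    bondingRange G f n m = (bondingRange G f (n + 1) m).map (f n) := by
  rw [bondingRange_of_le h, bondingRange_of_le (n.le_succ.trans h), ← AddMonoidHom.range_comp]
  congr 1
  ext v
  exact (fnm_succ_left h v).symm

theorem map_bondingRange_succ_le (n m : ℕ) :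
    (bondingRange G f (n + 1) m).map (f n) ≤ bondingRange G f n m := by
  by_cases h : n + 1 ≤ m
  · exact (bondingRange_eq_map_succ h).ge
  · rw [bondingRange_eq_top (by omega : m ≤ n)]
    exact le_top

variable (G f) in
def MittagLeffler : Prop :=
  ∀ n, ∃ m, ∀ k ≥ m, bondingRange G f n k = bondingRange G f n m

theorem mittagLeffler_iff_forall_range_fnm_eq : MittagLeffler G f ↔
    ∀ n : ℕ, ∃ m : ℕ, ∃ hm : n ≤ m, ∀ k : ℕ, ∀ hk : m ≤ k,
      (fnm G f n k (hm.trans hk)).range = (fnm G f n m hm).range := by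
  refine forall_congr' fun n => ⟨fun ⟨m, hm⟩ => ?_, fun ⟨m, hnm, hm⟩ => ⟨m, fun k hk => ?_⟩⟩
  · refine ⟨max n m, le_max_left n m, fun k hk => ?_⟩
    rw [← bondingRange_of_le, ← bondingRange_of_le, hm k (by omega), hm (max n m) (by omega)]
  · rw [bondingRange_of_le (hnm.trans hk), bondingRange_of_le hnm, hm k hk]

variable (G f) in
/-- `partialSum G f x k n = ∑ i < k, f_{n,n+i} (x (n + i))`, written in Horner form. -/
def partialSum (x : ∀ n, G n) : ℕ → ∀ n, G n
  | 0, _ => 0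
  | k + 1, n => x n + f n (partialSum x k (n + 1))

theorem partialSum_add_sub_mem (x : ∀ n, G n) (k l n : ℕ) :
    partialSum G f x (k + l) n - partialSum G f x k n ∈ bondingRange G f n (n + k) := by
  induction k generalizing n with
  | zero => simp [bondingRange_eq_top]
  | succ k ih =>
    rw [Nat.add_right_comm, partialSum, partialSum, add_sub_add_left_eq_sub, ← map_sub,
      show n + (k + 1) = n + 1 + k by omega]
    exact map_bondingRange_succ_le n _ (AddSubgroup.mem_map_of_mem _ (ih (n + 1)))

theorem exists_sub_delta_mem {H : ∀ n, AddSubgroup (G n)}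
    (hH : ∀ n, ∃ m, bondingRange G f n m ≤ H n) (x : ∀ n, G n) :
    ∃ y, ∀ n, x n - delta G f y n ∈ H n := by
  choose s hs using hH
  let K n := ∑ i ∈ Finset.range (n + 1), s i
  refine ⟨fun n => partialSum G f x (K n + 1) n, fun n => ?_⟩
  have hK : K (n + 1) + 1 = K n + (s (n + 1) + 1) := by
    simp only [K, Finset.sum_range_succ _ (n + 1)]
    ring
  have hs_le : s n ≤ n + 1 + K n :=
    (Finset.single_le_sum (by simp) (Finset.self_mem_range_succ n)).trans (Nat.le_add_left _ _)
  change x n - (partialSum G f x (K n + 1) n - f n (partialSum G f x (K (n + 1) + 1) (n + 1)))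
    ∈ H n
  rw [hK, partialSum, ← sub_add, sub_add_cancel_left, neg_add_eq_sub, ← map_sub]
  exact hs n <| bondingRange_antitone n hs_le <| map_bondingRange_succ_le n _ <|
    AddSubgroup.mem_map_of_mem _ (partialSum_add_sub_mem x _ _ _)

theorem mem_range_delta_of_forall_mem {H : ∀ n, AddSubgroup (G n)}
    (hH : ∀ n, H n ≤ (H (n + 1)).map (f n)) {d : ∀ n, G n} (hd : ∀ n, d n ∈ H n) :
    d ∈ (delta G f).range := by
  have hsurj (n : ℕ) (h : H n) : ∃ h' : H (n + 1), f n h' = h := by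
    obtain ⟨h', hh', hf⟩ := AddSubgroup.mem_map.mp (hH n h.2)
    exact ⟨⟨h', hh'⟩, hf⟩
  choose lift hlift using hsurj
  let z : ∀ n, H n := fun n =>
    Nat.rec (motive := fun n => H n) 0 (fun n zn => lift n (zn - ⟨d n, hd n⟩)) n
  refine ⟨fun n => (z n).1, funext fun n => ?_⟩
  change (z n).1 - f n (lift n (z n - ⟨d n, hd n⟩)).1 = d n
  rw [hlift]
  simp

theorem MittagLeffler.surjective_delta (hML : MittagLeffler G f) :
    Function.Surjective (delta G f) := by
  choose s hs using hML
  have hstable (n : ℕ) : bondingRange G f n (s n) ≤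
      (bondingRange G f (n + 1) (s (n + 1))).map (f n) := by
    let k := max (n + 1) (max (s n) (s (n + 1)))
    rw [← hs n k (by omega), ← hs (n + 1) k (by omega)]
    exact (bondingRange_eq_map_succ (by omega)).le
  intro x
  obtain ⟨y, hy⟩ := exists_sub_delta_mem (fun n => ⟨s n, le_rfl⟩) x
  obtain ⟨z, hz⟩ := mem_range_delta_of_forall_mem hstable hy
  refine ⟨y + z, funext fun n => ?_⟩
  rw [map_add, hz]
  simp

theorem sub_mem_bondingRange_of_delta_eq {n : ℕ} {x y : ∀ n, G n} (hxy : delta G f y = x)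
    {S : ℕ → G n} (hS : ∀ j (hj : n ≤ j), fnm G f n j hj (x j) = S (j + 1) - S j) (J : ℕ) :
    S n + y n - S J ∈ bondingRange G f n J := by
  by_cases hJ : n ≤ J
  · have key : S J + fnm G f n J hJ (y J) = S n + y n := by
      induction J, hJ using Nat.le_induction with
      | base => rw [fnm_self]; rfl
      | succ J hJ ih =>
        have hx : x J = y J - f J (y (J + 1)) := by rw [← hxy]; rfl
        rw [fnm_succ hJ, AddMonoidHom.comp_apply, ← ih, ← sub_add_cancel (S (J + 1)) (S J),
          ← hS J hJ, hx, map_sub]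
        abel
    rw [← key, add_sub_cancel_left]
    exact fnm_mem_bondingRange hJ _
  · rw [bondingRange_eq_top (by omega)]
    exact AddSubgroup.mem_top _

theorem mittagLeffler_of_surjective_delta [∀ n, Countable (G n)]
    (hΔ : Function.Surjective (delta G f)) : MittagLeffler G f := by
  by_contra hML
  obtain ⟨n, hn⟩ : ∃ n, ∀ m, ∃ k ≥ m, bondingRange G f n k ≠ bondingRange G f n m := by
    simpa [MittagLeffler] using hML
  set I := bondingRange G f n
  obtain ⟨a, ha⟩ :=
    ((bondingRange_antitone n).infinite_setOf_lt_succ hn).exists_surjOn_univ (α := G n)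
  have hg (j : ℕ) (c : G n) : ∃ g ∈ I j, I (j + 1) < I j → c - g ∉ I (j + 1) := by
    by_cases hj : I (j + 1) < I j
    · obtain ⟨g, hg, hc⟩ := AddSubgroup.exists_mem_sub_notMem_of_lt hj c
      exact ⟨g, hg, fun _ => hc⟩
    · exact ⟨0, zero_mem _, fun h => absurd h hj⟩
  choose g hgI hgD using hg
  obtain ⟨S, hS⟩ : ∃ S : ℕ → G n, ∀ j, S (j + 1) = S j + g j (a j - S j) :=
    ⟨fun j => Nat.rec 0 (fun j s => s + g j (a j - s)) j, fun j => rfl⟩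
  have hx (j : ℕ) : ∃ v : G j, ∀ hj : n ≤ j, fnm G f n j hj v = S (j + 1) - S j := by
    by_cases hj : n ≤ j
    · obtain ⟨v, hv⟩ : S (j + 1) - S j ∈ (fnm G f n j hj).range := by
        rw [hS, add_sub_cancel_left, ← bondingRange_of_le hj]
        exact hgI _ _
      exact ⟨v, fun _ => hv⟩
    · exact ⟨0, fun h => absurd h hj⟩
  choose x hx using hx
  obtain ⟨y, hy⟩ := hΔ x
  obtain ⟨j, hjD, hj⟩ := ha (Set.mem_univ (S n + y n))
  have hmem := sub_mem_bondingRange_of_delta_eq hy hx (j + 1)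
  rw [← hj, hS, sub_add_eq_sub_sub] at hmem
  exact hgD j _ hjD hmem

end InverseSequence

/-- Let `(G n, f n)` be an inverse sequence of countable abelian groups
indexed by `ℕ`.  Then `(G n)` satisfies the Mittag-Leffler condition (for each `n` there is
`m ≥ n` with `Im f_{n,m} = Im f_{n,k}` for all `k ≥ m`) if and only if the derived limit
`lim¹ G n` — the cokernel of `Δ`, i.e. the quotient `(∏ G n) ⧸ range Δ` — is the zero group. -/
theorem mittagLeffler_iff_lim1_eq_zero
    (G : ℕ → Type*) [∀ n, AddCommGroup (G n)] [∀ n, Countable (G n)]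
    (f : ∀ n, G (n + 1) →+ G n) :
    (∀ n : ℕ, ∃ m : ℕ, ∃ hm : n ≤ m, ∀ k : ℕ, ∀ hk : m ≤ k,
        (fnm G f n k (hm.trans hk)).range = (fnm G f n m hm).range) ↔
      Subsingleton ((∀ n, G n) ⧸ (delta G f).range) := by
  rw [← mittagLeffler_iff_forall_range_fnm_eq, QuotientAddGroup.subsingleton_iff,
    AddMonoidHom.range_eq_top]
  exact ⟨MittagLeffler.surjective_delta, mittagLeffler_of_surjective_delta⟩
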